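/- arXiv:2510.07451 — 6 statements merged into one kernel-verified Lean document; each statement's English description precedes it below -/
import Mathlib

section
/- For all real angles θ, φ, every polarization vector ε ∈ ℂ³ satisfying ε·k̂(θ,φ) = 0, and every p ∈ {−1, 0, +1}, one has ε·Y⁽⁺¹⁾₁,ₚ(θ,φ) = √(3/(8π)) · εₚ, where εₚ denotes the spherical component of ε. (This is the rank-1 case of the paper's polarization identity, Theorem 1.) -/
noncomputable section

open Real Complex

/-- Propagation direction unit vector. -/
def khat (θ φ : ℝ) : Fin 3 → ℂ :=
  ![((Real.sin θ * Real.cos φ : ℝ) : ℂ), ((Real.sin θ * Real.sin φ : ℝ) : ℂ),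
    ((Real.cos θ : ℝ) : ℂ)]

/-- Polar unit vector θ̂. -/
def thetahat (θ φ : ℝ) : Fin 3 → ℂ :=
  ![((Real.cos θ * Real.cos φ : ℝ) : ℂ), ((Real.cos θ * Real.sin φ : ℝ) : ℂ),
    ((-Real.sin θ : ℝ) : ℂ)]

/-- Azimuthal unit vector φ̂. -/
def phihat (θ φ : ℝ) : Fin 3 → ℂ :=
  ![((-Real.sin φ : ℝ) : ℂ), ((Real.cos φ : ℝ) : ℂ), 0]

/-- Unconjugated bilinear dot product on ℂ³. -/
def dotc (A B : Fin 3 → ℂ) : ℂ := ∑ i, A i * B i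

/-- Spherical components of a vector in ℂ³. -/
def sph (A : Fin 3 → ℂ) (q : ℤ) : ℂ :=
  if q = 1 then -(A 0 + Complex.I * A 1) / (Real.sqrt 2 : ℂ)
  else if q = 0 then A 2
  else if q = -1 then (A 0 - Complex.I * A 1) / (Real.sqrt 2 : ℂ)
  else 0

/-- Rank-1 type-(+1) vector spherical harmonics. -/
def Y1v (p : ℤ) (θ φ : ℝ) : Fin 3 → ℂ :=
  if p = 0 then fun i =>
    -((Real.sqrt (3 / (8 * Real.pi)) : ℝ) : ℂ) * ((Real.sin θ : ℝ) : ℂ) * thetahat θ φ i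
  else if p = 1 then fun i =>
    -Complex.exp (Complex.I * (φ : ℂ)) * ((Real.sqrt (3 / (16 * Real.pi)) : ℝ) : ℂ) *
      (((Real.cos θ : ℝ) : ℂ) * thetahat θ φ i + Complex.I * phihat θ φ i)
  else if p = -1 then fun i =>
    Complex.exp (-Complex.I * (φ : ℂ)) * ((Real.sqrt (3 / (16 * Real.pi)) : ℝ) : ℂ) *
      (((Real.cos θ : ℝ) : ℂ) * thetahat θ φ i - Complex.I * phihat θ φ i)
  else 0

/-- Rank-2 type-(+1) vector spherical harmonics. -/
def Y2v (p : ℤ) (θ φ : ℝ) : Fin 3 → ℂ :=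
  if p = 0 then fun i =>
    -((Real.sqrt (15 / (32 * Real.pi)) : ℝ) : ℂ) * ((Real.sin (2 * θ) : ℝ) : ℂ) * thetahat θ φ i
  else if p = 1 then fun i =>
    -Complex.exp (Complex.I * (φ : ℂ)) * ((Real.sqrt (5 / (16 * Real.pi)) : ℝ) : ℂ) *
      (((Real.cos (2 * θ) : ℝ) : ℂ) * thetahat θ φ i
        + Complex.I * ((Real.cos θ : ℝ) : ℂ) * phihat θ φ i)
  else if p = -1 then fun i =>
    Complex.exp (-Complex.I * (φ : ℂ)) * ((Real.sqrt (5 / (16 * Real.pi)) : ℝ) : ℂ) *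
      (((Real.cos (2 * θ) : ℝ) : ℂ) * thetahat θ φ i
        - Complex.I * ((Real.cos θ : ℝ) : ℂ) * phihat θ φ i)
  else if p = 2 then fun i =>
    Complex.exp (2 * Complex.I * (φ : ℂ)) * ((Real.sqrt (5 / (16 * Real.pi)) : ℝ) : ℂ) *
      ((Real.sin θ : ℝ) : ℂ) *
      (((Real.cos θ : ℝ) : ℂ) * thetahat θ φ i + Complex.I * phihat θ φ i)
  else if p = -2 then fun i =>
    Complex.exp (-(2 * Complex.I) * (φ : ℂ)) * ((Real.sqrt (5 / (16 * Real.pi)) : ℝ) : ℂ) *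
      ((Real.sin θ : ℝ) : ℂ) *
      (((Real.cos θ : ℝ) : ℂ) * thetahat θ φ i - Complex.I * phihat θ φ i)
  else 0

/-- Degree-1 scalar spherical harmonics. -/
def Y1s (m : ℤ) (θ φ : ℝ) : ℂ :=
  if m = 0 then ((Real.sqrt (3 / (4 * Real.pi)) * Real.cos θ : ℝ) : ℂ)
  else if m = 1 then
    -((Real.sqrt (3 / (8 * Real.pi)) * Real.sin θ : ℝ) : ℂ) * Complex.exp (Complex.I * (φ : ℂ))
  else if m = -1 then
    ((Real.sqrt (3 / (8 * Real.pi)) * Real.sin θ : ℝ) : ℂ) * Complex.exp (-Complex.I * (φ : ℂ))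
  else 0

/-- Degree-2 scalar spherical harmonics. -/
def Y2s (m : ℤ) (θ φ : ℝ) : ℂ :=
  if m = 0 then ((Real.sqrt (5 / (16 * Real.pi)) * (3 * Real.cos θ ^ 2 - 1) : ℝ) : ℂ)
  else if m = 1 then
    -((Real.sqrt (15 / (8 * Real.pi)) * (Real.sin θ * Real.cos θ) : ℝ) : ℂ) *
      Complex.exp (Complex.I * (φ : ℂ))
  else if m = -1 then
    ((Real.sqrt (15 / (8 * Real.pi)) * (Real.sin θ * Real.cos θ) : ℝ) : ℂ) *
      Complex.exp (-Complex.I * (φ : ℂ))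
  else if m = 2 then
    ((Real.sqrt (15 / (32 * Real.pi)) * Real.sin θ ^ 2 : ℝ) : ℂ) *
      Complex.exp (2 * Complex.I * (φ : ℂ))
  else if m = -2 then
    ((Real.sqrt (15 / (32 * Real.pi)) * Real.sin θ ^ 2 : ℝ) : ℂ) *
      Complex.exp (-(2 * Complex.I) * (φ : ℂ))
  else 0

/-- Rank-2 irreducible tensor product of two rank-1 systems of components. -/
def T2 (A B : ℤ → ℂ) (p : ℤ) : ℂ :=
  if p = 2 then A 1 * B 1
  else if p = 1 then (A 1 * B 0 + A 0 * B 1) / (Real.sqrt 2 : ℂ)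
  else if p = 0 then (A 1 * B (-1) + 2 * A 0 * B 0 + A (-1) * B 1) / (Real.sqrt 6 : ℂ)
  else if p = -1 then (A (-1) * B 0 + A 0 * B (-1)) / (Real.sqrt 2 : ℂ)
  else if p = -2 then A (-1) * B (-1)
  else 0

/-- rank-1 polarization identity:
for ε ⊥ k̂, ε·Y⁽⁺¹⁾₁,ₚ(θ,φ) = √(3/(8π)) εₚ for p ∈ {-1,0,1}. -/
theorem rank_one_polarization_identity (θ φ : ℝ) (ε : Fin 3 → ℂ)
    (hperp : dotc ε (khat θ φ) = 0) (p : ℤ) (hp : p = -1 ∨ p = 0 ∨ p = 1) :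
    dotc ε (Y1v p θ φ) = ((Real.sqrt (3 / (8 * Real.pi)) : ℝ) : ℂ) * sph ε p := by
  have h2 : ((Real.sqrt 2 : ℝ) : ℂ) ≠ 0 := by
    exact_mod_cast Real.sqrt_ne_zero'.2 (by norm_num)
  have hinv : ((Real.sqrt 2 : ℝ) : ℂ) * (((Real.sqrt 2 : ℝ) : ℂ))⁻¹ = 1 := mul_inv_cancel₀ h2
  have hs : ((Real.sqrt (3 / (8 * Real.pi)) : ℝ) : ℂ) =
      ((Real.sqrt 2 : ℝ) : ℂ) * ((Real.sqrt (3 / (16 * Real.pi)) : ℝ) : ℂ) := by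
    rw [← Complex.ofReal_mul]
    norm_cast
    rw [show (3 / (8 * Real.pi) : ℝ) = 2 * (3 / (16 * Real.pi)) by ring,
      Real.sqrt_mul (by norm_num)]
  have hQ : Complex.sin θ ^ 2 + Complex.cos θ ^ 2 = 1 := Complex.sin_sq_add_cos_sq θ
  have hR : Complex.sin φ ^ 2 + Complex.cos φ ^ 2 = 1 := Complex.sin_sq_add_cos_sq φ
  have hI : (Complex.I) ^ 2 = -1 := Complex.I_sq
  have hE : Complex.exp (Complex.I * (φ : ℂ)) =
      Complex.cos (φ : ℂ) + Complex.sin (φ : ℂ) * Complex.I := by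
    rw [mul_comm, Complex.exp_mul_I]
  have hE' : Complex.exp (-Complex.I * (φ : ℂ)) =
      Complex.cos (φ : ℂ) - Complex.sin (φ : ℂ) * Complex.I := by
    rw [show -Complex.I * (φ:ℂ) = (-φ:ℂ) * Complex.I by ring, Complex.exp_mul_I,
      Complex.cos_neg, Complex.sin_neg]
    ring
  simp only [dotc, khat, Fin.sum_univ_three, Matrix.cons_val_zero, Matrix.cons_val_one,
    Matrix.head_cons, Matrix.cons_val_two, Matrix.tail_cons] at hperp
  push_cast at hperp
  set s : ℂ := ((Real.sqrt (3 / (16 * Real.pi)) : ℝ) : ℂ) with hsdef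
  set r2 : ℂ := ((Real.sqrt 2 : ℝ) : ℂ) with hr2def
  set ST := Complex.sin (θ : ℂ)
  set CT := Complex.cos (θ : ℂ)
  set SF := Complex.sin (φ : ℂ)
  set CF := Complex.cos (φ : ℂ)
  rcases hp with rfl | rfl | rfl
  · simp only [Y1v, sph, thetahat, phihat, dotc, Fin.sum_univ_three, Matrix.cons_val_zero,
      Matrix.cons_val_one, Matrix.head_cons, Matrix.cons_val_two, Matrix.tail_cons,
      show ((-1:ℤ) = 0) = False by simp, show ((-1:ℤ) = 1) = False by simp,
      show ((-1:ℤ) = -1) = True by simp, if_true, if_false, hE', hs]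
    push_cast
    linear_combination (-s * ST * (CF - SF * Complex.I)) * hperp
      + s * (CF - SF * Complex.I) * (ε 0 * CF + ε 1 * SF) * hQ
      + s * (ε 0 - Complex.I * ε 1) * hR
      - s * (ε 0 * SF ^ 2 - ε 1 * SF * CF) * hI
      - s * (ε 0 - Complex.I * ε 1) * hinv
  · simp only [Y1v, sph, thetahat, phihat, dotc, Fin.sum_univ_three, Matrix.cons_val_zero,
      Matrix.cons_val_one, Matrix.head_cons, Matrix.cons_val_two, Matrix.tail_cons,
      show ((0:ℤ) = 0) = True by simp, if_true]
    push_cast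
    linear_combination (-((Real.sqrt (3 / (8 * Real.pi)) : ℝ) : ℂ) * CT) * hperp
      + ((Real.sqrt (3 / (8 * Real.pi)) : ℝ) : ℂ) * ε 2 * hQ
  · simp only [Y1v, sph, thetahat, phihat, dotc, Fin.sum_univ_three, Matrix.cons_val_zero,
      Matrix.cons_val_one, Matrix.head_cons, Matrix.cons_val_two, Matrix.tail_cons,
      show ((1:ℤ) = 0) = False by simp, show ((1:ℤ) = 1) = True by simp,
      if_true, if_false, hE, hs]
    push_cast
    linear_combination (s * ST * (CF + SF * Complex.I)) * hperp
      - s * (CF + SF * Complex.I) * (ε 0 * CF + ε 1 * SF) * hQ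
      - s * (ε 0 + Complex.I * ε 1) * hR
      + s * (ε 0 * SF ^ 2 - ε 1 * SF * CF) * hI
      + s * (ε 0 + Complex.I * ε 1) * hinv
end
end

section
/- For all real angles θ, φ, every polarization vector ε ∈ ℂ³ satisfying ε·k̂(θ,φ) = 0, and every p ∈ {−2, −1, 0, 1, 2}, the rank-2 irreducible tensor product of the degree-1 scalar spherical harmonics of (θ,φ) with ε satisfies T⁽²⁾ₚ[Y₍₁₎(θ,φ), ε] = √(3/5) · (ε·Y⁽⁺¹⁾₂,ₚ(θ,φ)), where the tensor product is formed with components Aₘ = Y₁,ₘ(θ,φ) and B_q = ε_q. (This is the rank-2 case of the paper's polarization identity, Theorem 1.) -/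
noncomputable section

open Real Complex

section Helpers

lemma mysqrt_mul {x y z : ℝ} (hx : 0 ≤ x) (h : x * y = z) :
    Real.sqrt x * Real.sqrt y = Real.sqrt z := by
  rw [← Real.sqrt_mul hx, h]

lemma mysqrt_div (x y : ℝ) (hx : 0 ≤ x) :
    Real.sqrt x / Real.sqrt y = Real.sqrt (x / y) := (Real.sqrt_div hx y).symm

lemma expI (φ : ℝ) :
    Complex.exp (Complex.I * φ) = (Real.cos φ : ℂ) + (Real.sin φ : ℂ) * Complex.I := by
  rw [mul_comm, Complex.exp_mul_I, Complex.ofReal_cos, Complex.ofReal_sin]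

lemma expInegI (φ : ℝ) :
    Complex.exp (-Complex.I * φ) = (Real.cos φ : ℂ) - (Real.sin φ : ℂ) * Complex.I := by
  have h : (-Complex.I * φ : ℂ) = ((-φ : ℝ) : ℂ) * Complex.I := by push_cast; ring
  rw [h, Complex.ofReal_neg, Complex.exp_mul_I, Complex.cos_neg, Complex.sin_neg,
    Complex.ofReal_cos, Complex.ofReal_sin]
  ring

lemma sincos_sq (θ : ℝ) : ((Real.sin θ : ℂ)) ^ 2 + ((Real.cos θ : ℂ)) ^ 2 = 1 := by
  exact_mod_cast congrArg (Complex.ofReal) (Real.sin_sq_add_cos_sq θ)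

lemma lemA (θ φ : ℝ) (ε : Fin 3 → ℂ) (hperp : dotc ε (khat θ φ) = 0) :
    (Real.sin θ : ℂ) * dotc ε (thetahat θ φ) = -ε 2 := by
  have h1 := sincos_sq θ
  simp only [dotc, khat, thetahat, Fin.sum_univ_three, Matrix.cons_val_zero, Matrix.cons_val_one,
    Matrix.head_cons, Matrix.cons_val_two, Matrix.tail_cons] at hperp ⊢
  simp only [Complex.ofReal_mul, Complex.ofReal_neg] at hperp ⊢
  linear_combination (Real.cos θ : ℂ) * hperp - ε 2 * h1

lemma lemB (θ φ : ℝ) (ε : Fin 3 → ℂ) (hperp : dotc ε (khat θ φ) = 0) :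
    Complex.exp (Complex.I * φ) *
      ((Real.cos θ : ℂ) * dotc ε (thetahat θ φ) + Complex.I * dotc ε (phihat θ φ))
      = ε 0 + Complex.I * ε 1 := by
  have h1 := sincos_sq θ
  have h2 := sincos_sq φ
  have hI : (Complex.I) ^ 2 = -1 := Complex.I_sq
  rw [expI]
  simp only [dotc, khat, thetahat, phihat, Fin.sum_univ_three, Matrix.cons_val_zero,
    Matrix.cons_val_one, Matrix.head_cons, Matrix.cons_val_two, Matrix.tail_cons] at hperp ⊢
  simp only [Complex.ofReal_mul, Complex.ofReal_neg] at hperp ⊢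
  linear_combination (ε 0 + Complex.I * ε 1) * h2
    + ((Real.cos φ : ℂ) ^ 2 * ε 0 + (Real.cos φ : ℂ) * (Real.sin φ : ℂ) * ε 1
        + Complex.I * ((Real.sin φ : ℂ) * (Real.cos φ : ℂ) * ε 0 + (Real.sin φ : ℂ) ^ 2 * ε 1)) * h1
    - (Real.sin θ : ℂ) * ((Real.cos φ : ℂ) + Complex.I * (Real.sin φ : ℂ)) * hperp
    + (Real.sin φ : ℂ) * (-(Real.sin φ : ℂ) * ε 0 + (Real.cos φ : ℂ) * ε 1) * hI

lemma lemC (θ φ : ℝ) (ε : Fin 3 → ℂ) (hperp : dotc ε (khat θ φ) = 0) :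
    Complex.exp (-Complex.I * φ) *
      ((Real.cos θ : ℂ) * dotc ε (thetahat θ φ) - Complex.I * dotc ε (phihat θ φ))
      = ε 0 - Complex.I * ε 1 := by
  have h1 := sincos_sq θ
  have h2 := sincos_sq φ
  have hI : (Complex.I) ^ 2 = -1 := Complex.I_sq
  rw [expInegI]
  simp only [dotc, khat, thetahat, phihat, Fin.sum_univ_three, Matrix.cons_val_zero,
    Matrix.cons_val_one, Matrix.head_cons, Matrix.cons_val_two, Matrix.tail_cons] at hperp ⊢
  simp only [Complex.ofReal_mul, Complex.ofReal_neg] at hperp ⊢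
  linear_combination (ε 0 - Complex.I * ε 1) * h2
    + ((Real.cos φ : ℂ) ^ 2 * ε 0 + (Real.cos φ : ℂ) * (Real.sin φ : ℂ) * ε 1
        - Complex.I * ((Real.sin φ : ℂ) * (Real.cos φ : ℂ) * ε 0 + (Real.sin φ : ℂ) ^ 2 * ε 1)) * h1
    - (Real.sin θ : ℂ) * ((Real.cos φ : ℂ) - Complex.I * (Real.sin φ : ℂ)) * hperp
    + (Real.sin φ : ℂ) * (-(Real.sin φ : ℂ) * ε 0 + (Real.cos φ : ℂ) * ε 1) * hI


lemma sqrt_four : Real.sqrt 4 = 2 := by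
  rw [show (4:ℝ) = 2^2 by norm_num, Real.sqrt_sq (by norm_num : (0:ℝ) ≤ 2)]

lemma sqrt_nine : Real.sqrt 9 = 3 := by
  rw [show (9:ℝ) = 3^2 by norm_num, Real.sqrt_sq (by norm_num : (0:ℝ) ≤ 3)]

lemma RK2 : Real.sqrt (3/(8*Real.pi)) / Real.sqrt 2
    = Real.sqrt (3/5) * Real.sqrt (5/(16*Real.pi)) := by
  rw [mysqrt_div _ 2 (by positivity),
    mysqrt_mul (by norm_num : (0:ℝ) ≤ 3/5)
      (show (3/5) * (5/(16*Real.pi)) = 3/(8*Real.pi)/2 by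
        field_simp; ring)]

lemma RK1 : Real.sqrt (3/(4*Real.pi)) / (Real.sqrt 2 * Real.sqrt 2)
    = Real.sqrt (3/5) * Real.sqrt (5/(16*Real.pi)) := by
  rw [Real.mul_self_sqrt (by norm_num : (0:ℝ) ≤ 2), ← sqrt_four,
    mysqrt_div _ 4 (by positivity),
    mysqrt_mul (by norm_num : (0:ℝ) ≤ 3/5)
      (show (3/5) * (5/(16*Real.pi)) = 3/(4*Real.pi)/4 by
        field_simp; ring)]

lemma RK0 : Real.sqrt (3/(8*Real.pi))/(Real.sqrt 2 * Real.sqrt 6)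
      + Real.sqrt (3/(4*Real.pi))/Real.sqrt 6
    = Real.sqrt (3/5) * Real.sqrt (15/(32*Real.pi)) := by
  rw [mysqrt_mul (by norm_num : (0:ℝ) ≤ 2) (show (2:ℝ)*6 = 12 by norm_num),
    mysqrt_div _ 12 (by positivity), mysqrt_div _ 6 (by positivity),
    mysqrt_mul (by norm_num : (0:ℝ) ≤ 3/5)
      (show (3/5) * (15/(32*Real.pi)) = 9/(32*Real.pi) by field_simp; ring),
    show (3/(8*Real.pi))/12 = 1/(32*Real.pi) by field_simp; ring,
    show (3/(4*Real.pi))/6 = 4*(1/(32*Real.pi)) by field_simp; ring,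
    show (9:ℝ)/(32*Real.pi) = 9*(1/(32*Real.pi)) by ring,
    ← mysqrt_mul (by norm_num : (0:ℝ) ≤ 4) rfl,
    ← mysqrt_mul (by norm_num : (0:ℝ) ≤ 9) rfl, sqrt_four, sqrt_nine]
  ring

end Helpers

/-- rank-2 polarization identity:
for ε ⊥ k̂, T⁽²⁾ₚ[Y₍₁₎(θ,φ), ε] = √(3/5) (ε·Y⁽⁺¹⁾₂,ₚ(θ,φ)) for |p| ≤ 2. -/
theorem rank_two_polarization_identity (θ φ : ℝ) (ε : Fin 3 → ℂ)
    (hperp : dotc ε (khat θ φ) = 0) (p : ℤ) (hp : |p| ≤ 2) :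
    T2 (fun m => Y1s m θ φ) (sph ε) p
      = ((Real.sqrt (3 / 5) : ℝ) : ℂ) * dotc ε (Y2v p θ φ) := by
  have hA := lemA θ φ ε hperp
  have hB := lemB θ φ ε hperp
  have hC := lemC θ φ ε hperp
  have h1 := sincos_sq θ
  have hEE : Complex.exp (Complex.I * (φ:ℂ)) * Complex.exp (-Complex.I * (φ:ℂ)) = 1 := by
    rw [← Complex.exp_add, show Complex.I*(φ:ℂ) + -Complex.I*(φ:ℂ) = 0 by ring,
      Complex.exp_zero]
  have hk2 : ((Real.sqrt (3/(8*Real.pi)) : ℝ) : ℂ) / ((Real.sqrt 2 : ℝ) : ℂ) = ((Real.sqrt (3/5) : ℝ) : ℂ) * ((Real.sqrt (5/(16*Real.pi)) : ℝ) : ℂ) := by exact_mod_cast congrArg Complex.ofReal RK2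
  have hk1 : ((Real.sqrt (3/(4*Real.pi)) : ℝ) : ℂ) / (((Real.sqrt 2 : ℝ) : ℂ) * ((Real.sqrt 2 : ℝ) : ℂ)) = ((Real.sqrt (3/5) : ℝ) : ℂ) * ((Real.sqrt (5/(16*Real.pi)) : ℝ) : ℂ) := by exact_mod_cast congrArg Complex.ofReal RK1
  have hk0 : ((Real.sqrt (3/(8*Real.pi)) : ℝ) : ℂ) / (((Real.sqrt 2 : ℝ) : ℂ) * ((Real.sqrt 6 : ℝ) : ℂ)) + ((Real.sqrt (3/(4*Real.pi)) : ℝ) : ℂ) / ((Real.sqrt 6 : ℝ) : ℂ) = ((Real.sqrt (3/5) : ℝ) : ℂ) * ((Real.sqrt (15/(32*Real.pi)) : ℝ) : ℂ) := by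
    exact_mod_cast congrArg Complex.ofReal RK0
  obtain ⟨hl, hr⟩ := abs_le.mp hp
  interval_cases p
  · -- p = -2
    have hdot : dotc ε (Y2v (-2) θ φ)
        = Complex.exp (-(2*Complex.I)*(φ:ℂ)) * ((Real.sqrt (5/(16*Real.pi)) : ℝ) : ℂ) * (Real.sin θ : ℂ) * ((Real.cos θ : ℂ) * dotc ε (thetahat θ φ) - Complex.I * dotc ε (phihat θ φ)) := by
      simp only [Y2v, Int.reduceNeg, Int.reduceEq, reduceIte, dotc, Fin.sum_univ_three, Matrix.cons_val_zero, Matrix.cons_val_one, Matrix.head_cons, Matrix.cons_val_two, Matrix.tail_cons, Complex.ofReal_neg, Complex.ofReal_mul, Complex.ofReal_sub, Complex.ofReal_pow, Complex.ofReal_one, Complex.ofReal_ofNat]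
      ring
    rw [show (-(2*Complex.I)*(φ:ℂ)) = -Complex.I*(φ:ℂ) + -Complex.I*(φ:ℂ) by ring,
      Complex.exp_add] at hdot
    rw [hdot]
    simp only [T2, Y1s, sph, Int.reduceNeg, Int.reduceEq, reduceIte, Complex.ofReal_neg, Complex.ofReal_mul, Complex.ofReal_sub, Complex.ofReal_pow, Complex.ofReal_one, Complex.ofReal_ofNat]
    linear_combination (-(((Real.sqrt (3/(8*Real.pi)) : ℝ) : ℂ) * (Real.sin θ : ℂ) * Complex.exp (-Complex.I * (φ:ℂ)) / ((Real.sqrt 2 : ℝ) : ℂ))) * hC + ((Real.sin θ : ℂ) * Complex.exp (-Complex.I * (φ:ℂ))^2 * ((Real.cos θ : ℂ) * dotc ε (thetahat θ φ) - Complex.I * dotc ε (phihat θ φ))) * hk2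
  · -- p = -1
    have hdot : dotc ε (Y2v (-1) θ φ)
        = Complex.exp (-Complex.I * (φ:ℂ)) * ((Real.sqrt (5/(16*Real.pi)) : ℝ) : ℂ) * ((2*(Real.cos θ : ℂ)^2 - 1) * dotc ε (thetahat θ φ) - Complex.I * (Real.cos θ : ℂ) * dotc ε (phihat θ φ)) := by
      simp only [Y2v, Int.reduceNeg, Int.reduceEq, reduceIte, dotc, Fin.sum_univ_three, Matrix.cons_val_zero, Matrix.cons_val_one, Matrix.head_cons, Matrix.cons_val_two, Matrix.tail_cons, Complex.ofReal_neg, Complex.ofReal_mul, Complex.ofReal_sub, Complex.ofReal_pow, Complex.ofReal_one, Complex.ofReal_ofNat]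
      rw [Real.cos_two_mul]
      simp only [Complex.ofReal_neg, Complex.ofReal_mul, Complex.ofReal_sub, Complex.ofReal_pow, Complex.ofReal_one, Complex.ofReal_ofNat]
      ring
    rw [hdot]
    simp only [T2, Y1s, sph, Int.reduceNeg, Int.reduceEq, reduceIte, Complex.ofReal_neg, Complex.ofReal_mul, Complex.ofReal_sub, Complex.ofReal_pow, Complex.ofReal_one, Complex.ofReal_ofNat]
    linear_combination ((((Real.sqrt (3/5) : ℝ) : ℂ) * ((Real.sqrt (5/(16*Real.pi)) : ℝ) : ℂ)) * Complex.exp (-Complex.I * (φ:ℂ)) * (Real.sin θ : ℂ)) * hA + (-((((Real.sqrt (3/5) : ℝ) : ℂ) * ((Real.sqrt (5/(16*Real.pi)) : ℝ) : ℂ)) * (Real.cos θ : ℂ))) * hC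
      + (-((((Real.sqrt (3/5) : ℝ) : ℂ) * ((Real.sqrt (5/(16*Real.pi)) : ℝ) : ℂ)) * Complex.exp (-Complex.I * (φ:ℂ)) * dotc ε (thetahat θ φ))) * h1 + ((Real.sin θ : ℂ) * Complex.exp (-Complex.I * (φ:ℂ)) * ε 2) * hk2 + ((Real.cos θ : ℂ) * (ε 0 - Complex.I * ε 1)) * hk1
  · -- p = 0
    have hdot : dotc ε (Y2v 0 θ φ) = -(((Real.sqrt (15/(32*Real.pi)) : ℝ) : ℂ)) * (2 * (Real.sin θ : ℂ) * (Real.cos θ : ℂ)) * dotc ε (thetahat θ φ) := by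
      simp only [Y2v, Int.reduceNeg, Int.reduceEq, reduceIte, dotc, Fin.sum_univ_three, Matrix.cons_val_zero, Matrix.cons_val_one, Matrix.head_cons, Matrix.cons_val_two, Matrix.tail_cons, Complex.ofReal_neg, Complex.ofReal_mul, Complex.ofReal_sub, Complex.ofReal_pow, Complex.ofReal_one, Complex.ofReal_ofNat]
      rw [Real.sin_two_mul]
      simp only [Complex.ofReal_neg, Complex.ofReal_mul, Complex.ofReal_sub, Complex.ofReal_pow, Complex.ofReal_one, Complex.ofReal_ofNat]
      ring
    rw [hdot]
    simp only [T2, Y1s, sph, Int.reduceNeg, Int.reduceEq, reduceIte, Complex.ofReal_neg, Complex.ofReal_mul, Complex.ofReal_sub, Complex.ofReal_pow, Complex.ofReal_one, Complex.ofReal_ofNat]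
    linear_combination (((Real.sqrt (3/(8*Real.pi)) : ℝ) : ℂ) * (Real.sin θ : ℂ) * Complex.exp (Complex.I * (φ:ℂ)) / (((Real.sqrt 2 : ℝ) : ℂ) * ((Real.sqrt 6 : ℝ) : ℂ))) * hC
      + (((Real.sqrt (3/(8*Real.pi)) : ℝ) : ℂ) * (Real.sin θ : ℂ) * Complex.exp (-Complex.I * (φ:ℂ)) / (((Real.sqrt 2 : ℝ) : ℂ) * ((Real.sqrt 6 : ℝ) : ℂ))) * hB
      + (-(2 * ((Real.sqrt (3/(8*Real.pi)) : ℝ) : ℂ) * (Real.sin θ : ℂ) * (Real.cos θ : ℂ) * dotc ε (thetahat θ φ) / (((Real.sqrt 2 : ℝ) : ℂ) * ((Real.sqrt 6 : ℝ) : ℂ)))) * hEE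
      + (2 * ((Real.sqrt (3/(4*Real.pi)) : ℝ) : ℂ) * (Real.cos θ : ℂ) / ((Real.sqrt 6 : ℝ) : ℂ)) * hA + (-(2 * (Real.sin θ : ℂ) * (Real.cos θ : ℂ) * dotc ε (thetahat θ φ))) * hk0
  · -- p = 1
    have hdot : dotc ε (Y2v 1 θ φ)
        = -(Complex.exp (Complex.I * (φ:ℂ))) * ((Real.sqrt (5/(16*Real.pi)) : ℝ) : ℂ) * ((2*(Real.cos θ : ℂ)^2 - 1) * dotc ε (thetahat θ φ) + Complex.I * (Real.cos θ : ℂ) * dotc ε (phihat θ φ)) := by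
      simp only [Y2v, Int.reduceNeg, Int.reduceEq, reduceIte, dotc, Fin.sum_univ_three, Matrix.cons_val_zero, Matrix.cons_val_one, Matrix.head_cons, Matrix.cons_val_two, Matrix.tail_cons, Complex.ofReal_neg, Complex.ofReal_mul, Complex.ofReal_sub, Complex.ofReal_pow, Complex.ofReal_one, Complex.ofReal_ofNat]
      rw [Real.cos_two_mul]
      simp only [Complex.ofReal_neg, Complex.ofReal_mul, Complex.ofReal_sub, Complex.ofReal_pow, Complex.ofReal_one, Complex.ofReal_ofNat]
      ring
    rw [hdot]
    simp only [T2, Y1s, sph, Int.reduceNeg, Int.reduceEq, reduceIte, Complex.ofReal_neg, Complex.ofReal_mul, Complex.ofReal_sub, Complex.ofReal_pow, Complex.ofReal_one, Complex.ofReal_ofNat]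
    linear_combination (-((((Real.sqrt (3/5) : ℝ) : ℂ) * ((Real.sqrt (5/(16*Real.pi)) : ℝ) : ℂ)) * Complex.exp (Complex.I * (φ:ℂ)) * (Real.sin θ : ℂ))) * hA + ((((Real.sqrt (3/5) : ℝ) : ℂ) * ((Real.sqrt (5/(16*Real.pi)) : ℝ) : ℂ)) * (Real.cos θ : ℂ)) * hB
      + ((((Real.sqrt (3/5) : ℝ) : ℂ) * ((Real.sqrt (5/(16*Real.pi)) : ℝ) : ℂ)) * Complex.exp (Complex.I * (φ:ℂ)) * dotc ε (thetahat θ φ)) * h1 + (-(ε 2 * (Real.sin θ : ℂ) * Complex.exp (Complex.I * (φ:ℂ)))) * hk2 + (-((Real.cos θ : ℂ) * (ε 0 + Complex.I * ε 1))) * hk1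
  · -- p = 2
    have hdot : dotc ε (Y2v 2 θ φ)
        = Complex.exp (2*Complex.I*(φ:ℂ)) * ((Real.sqrt (5/(16*Real.pi)) : ℝ) : ℂ) * (Real.sin θ : ℂ) * ((Real.cos θ : ℂ) * dotc ε (thetahat θ φ) + Complex.I * dotc ε (phihat θ φ)) := by
      simp only [Y2v, Int.reduceNeg, Int.reduceEq, reduceIte, dotc, Fin.sum_univ_three, Matrix.cons_val_zero, Matrix.cons_val_one, Matrix.head_cons, Matrix.cons_val_two, Matrix.tail_cons, Complex.ofReal_neg, Complex.ofReal_mul, Complex.ofReal_sub, Complex.ofReal_pow, Complex.ofReal_one, Complex.ofReal_ofNat]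
      ring
    rw [show ((2:ℂ)*Complex.I*(φ:ℂ)) = Complex.I*(φ:ℂ) + Complex.I*(φ:ℂ) by ring,
      Complex.exp_add] at hdot
    rw [hdot]
    simp only [T2, Y1s, sph, Int.reduceNeg, Int.reduceEq, reduceIte, Complex.ofReal_neg, Complex.ofReal_mul, Complex.ofReal_sub, Complex.ofReal_pow, Complex.ofReal_one, Complex.ofReal_ofNat]
    linear_combination (-(((Real.sqrt (3/(8*Real.pi)) : ℝ) : ℂ) * (Real.sin θ : ℂ) * Complex.exp (Complex.I * (φ:ℂ)) / ((Real.sqrt 2 : ℝ) : ℂ))) * hB + ((Real.sin θ : ℂ) * Complex.exp (Complex.I * (φ:ℂ))^2 * ((Real.cos θ : ℂ) * dotc ε (thetahat θ φ) + Complex.I * dotc ε (phihat θ φ))) * hk2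
end
end

section
/- For all real angles θ, φ and every integer p with |p| ≤ 2, the squared norm of the rank-2 vector spherical harmonic satisfies the paper's angular-power-distribution formula: ‖Y⁽⁺¹⁾₂,ₚ(θ,φ)‖² = (1/12) [ (2+p)(3−p) |Y₂,ₚ₋₁(θ,φ)|² + 2p² |Y₂,ₚ(θ,φ)|² + (2−p)(3+p) |Y₂,ₚ₊₁(θ,φ)|² ], with the convention Y₂,ₘ := 0 for |m| > 2. -/
/-!
The vectors θ̂ and φ̂ have real components and unit length, so
‖z (a θ̂ + i b φ̂)‖² = |z|² (a² + b²) for real a, b. Hence every ‖Y⁽⁺¹⁾₂,ₚ‖², like every |Y₂,ₘ|²,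
is a polynomial in cos² θ divided by π, and for |p| ≤ 2 the formula is a polynomial identity.
For |p| ≥ 3 both sides vanish: the only nonzero term that can occur on the right,
|Y₂,±2|² at p = ±3, carries the factor 3 ∓ p = 0.
-/

noncomputable section

open Real Complex

lemma norm_sq_ofReal_add_I_mul_ofReal (x y : ℝ) : ‖(x : ℂ) + I * y‖ ^ 2 = x ^ 2 + y ^ 2 := by
  rw [Complex.sq_norm, mul_comm, Complex.normSq_add_mul_I]

lemma norm_exp_eq_one_of_re_eq_zero {w : ℂ} (hw : w.re = 0) : ‖exp w‖ = 1 := by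
  rw [norm_exp, hw, Real.exp_zero]

lemma norm_sq_ofReal_mul_exp (r : ℝ) {w : ℂ} (hw : w.re = 0) : ‖(r : ℂ) * exp w‖ ^ 2 = r ^ 2 := by
  rw [norm_mul, norm_exp_eq_one_of_re_eq_zero hw, mul_one, norm_real, Real.norm_eq_abs, sq_abs]

lemma sum_norm_sq_mul_thetahat_add_I_mul_phihat (z : ℂ) (a b θ φ : ℝ) :
    ∑ i, ‖z * (a * thetahat θ φ i + I * b * phihat θ φ i)‖ ^ 2 = ‖z‖ ^ 2 * (a ^ 2 + b ^ 2) := by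
  simp only [norm_mul, mul_pow, ← Finset.mul_sum, mul_assoc]
  congr 1
  simp only [Fin.sum_univ_three, thetahat, phihat, Matrix.cons_val_zero, Matrix.cons_val_one,
    Matrix.cons_val_two, Matrix.head_cons, Matrix.tail_cons, ← ofReal_mul, mul_zero,
    ← ofReal_zero, norm_sq_ofReal_add_I_mul_ofReal]
  linear_combination
    (a ^ 2 * Real.cos θ ^ 2 + b ^ 2) * Real.sin_sq_add_cos_sq φ + a ^ 2 * Real.sin_sq_add_cos_sq θ

section Y2s

variable (θ φ : ℝ)

lemma norm_sq_Y2s_zero :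
    ‖Y2s 0 θ φ‖ ^ 2 = 5 / (16 * π) * (3 * Real.cos θ ^ 2 - 1) ^ 2 := by
  rw [Y2s, if_pos rfl, norm_real, Real.norm_eq_abs, sq_abs, mul_pow,
    Real.sq_sqrt (by positivity)]

lemma norm_sq_Y2s_one :
    ‖Y2s 1 θ φ‖ ^ 2 = 15 / (8 * π) * (1 - Real.cos θ ^ 2) * Real.cos θ ^ 2 := by
  simp only [Y2s, Int.reduceEq, ↓reduceIte]
  rw [neg_mul, norm_neg, norm_sq_ofReal_mul_exp _ (by simp), mul_pow,
    Real.sq_sqrt (by positivity), mul_pow, Real.sin_sq, mul_assoc]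

lemma norm_sq_Y2s_neg_one :
    ‖Y2s (-1) θ φ‖ ^ 2 = 15 / (8 * π) * (1 - Real.cos θ ^ 2) * Real.cos θ ^ 2 := by
  simp only [Y2s, Int.reduceEq, Int.reduceNeg, ↓reduceIte]
  rw [norm_sq_ofReal_mul_exp _ (by simp), mul_pow, Real.sq_sqrt (by positivity), mul_pow,
    Real.sin_sq, mul_assoc]

lemma norm_sq_Y2s_two :
    ‖Y2s 2 θ φ‖ ^ 2 = 15 / (32 * π) * (1 - Real.cos θ ^ 2) ^ 2 := by
  simp only [Y2s, Int.reduceEq, ↓reduceIte]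
  rw [norm_sq_ofReal_mul_exp _ (by simp), mul_pow, Real.sq_sqrt (by positivity), Real.sin_sq]

lemma norm_sq_Y2s_neg_two :
    ‖Y2s (-2) θ φ‖ ^ 2 = 15 / (32 * π) * (1 - Real.cos θ ^ 2) ^ 2 := by
  simp only [Y2s, Int.reduceEq, Int.reduceNeg, ↓reduceIte]
  rw [norm_sq_ofReal_mul_exp _ (by simp), mul_pow, Real.sq_sqrt (by positivity), Real.sin_sq]

lemma Y2s_eq_zero {m : ℤ} (hm : m < -2 ∨ 2 < m) : Y2s m θ φ = 0 := by
  unfold Y2s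
  rw [if_neg (by omega), if_neg (by omega), if_neg (by omega), if_neg (by omega),
    if_neg (by omega)]

end Y2s

section Y2v

variable (θ φ : ℝ)

lemma sum_norm_sq_Y2v_zero :
    ∑ i, ‖Y2v 0 θ φ i‖ ^ 2 = 15 / (8 * π) * (1 - Real.cos θ ^ 2) * Real.cos θ ^ 2 := by
  have h : Y2v 0 θ φ = fun i => (-√(15 / (32 * π)) : ℝ) *
      (Real.sin (2 * θ) * thetahat θ φ i + I * (0 : ℝ) * phihat θ φ i) := by
    simp only [Y2v, ↓reduceIte, ofReal_zero, ofReal_neg]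
    ring_nf
  rw [h, sum_norm_sq_mul_thetahat_add_I_mul_phihat, norm_real, Real.norm_eq_abs, sq_abs, neg_sq,
    Real.sq_sqrt (by positivity), Real.sin_two_mul, mul_pow, mul_pow, Real.sin_sq]
  ring

lemma sum_norm_sq_Y2v_one :
    ∑ i, ‖Y2v 1 θ φ i‖ ^ 2
      = 5 / (16 * π) * ((2 * Real.cos θ ^ 2 - 1) ^ 2 + Real.cos θ ^ 2) := by
  have h : Y2v 1 θ φ = fun i => -(exp (I * φ) * √(5 / (16 * π))) *
      (Real.cos (2 * θ) * thetahat θ φ i + I * Real.cos θ * phihat θ φ i) := by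
    simp only [Y2v, Int.reduceEq, ↓reduceIte, neg_mul]
  rw [h, sum_norm_sq_mul_thetahat_add_I_mul_phihat, norm_neg, norm_mul,
    norm_exp_eq_one_of_re_eq_zero (by simp), norm_real, Real.norm_eq_abs, one_mul, sq_abs,
    Real.sq_sqrt (by positivity), Real.cos_two_mul]

lemma sum_norm_sq_Y2v_neg_one :
    ∑ i, ‖Y2v (-1) θ φ i‖ ^ 2
      = 5 / (16 * π) * ((2 * Real.cos θ ^ 2 - 1) ^ 2 + Real.cos θ ^ 2) := by
  have h : Y2v (-1) θ φ = fun i => (exp (-I * φ) * √(5 / (16 * π))) *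
      (Real.cos (2 * θ) * thetahat θ φ i + I * (-Real.cos θ : ℝ) * phihat θ φ i) := by
    simp only [Y2v, Int.reduceEq, Int.reduceNeg, ↓reduceIte, ofReal_neg]
    ring_nf
  rw [h, sum_norm_sq_mul_thetahat_add_I_mul_phihat, norm_mul,
    norm_exp_eq_one_of_re_eq_zero (by simp), norm_real, Real.norm_eq_abs, one_mul, sq_abs,
    Real.sq_sqrt (by positivity), Real.cos_two_mul, neg_sq]

lemma sum_norm_sq_Y2v_two :
    ∑ i, ‖Y2v 2 θ φ i‖ ^ 2 = 5 / (16 * π) * (1 - Real.cos θ ^ 4) := by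
  have h : Y2v 2 θ φ = fun i => (exp (2 * I * φ) * √(5 / (16 * π)) * Real.sin θ) *
      (Real.cos θ * thetahat θ φ i + I * (1 : ℝ) * phihat θ φ i) := by
    simp only [Y2v, Int.reduceEq, ↓reduceIte, ofReal_one, mul_one]
  rw [h, sum_norm_sq_mul_thetahat_add_I_mul_phihat, norm_mul, norm_mul,
    norm_exp_eq_one_of_re_eq_zero (by simp), norm_real, norm_real, Real.norm_eq_abs,
    Real.norm_eq_abs, one_mul, mul_pow, sq_abs, sq_abs, Real.sq_sqrt (by positivity), Real.sin_sq]
  ring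

lemma sum_norm_sq_Y2v_neg_two :
    ∑ i, ‖Y2v (-2) θ φ i‖ ^ 2 = 5 / (16 * π) * (1 - Real.cos θ ^ 4) := by
  have h : Y2v (-2) θ φ = fun i => (exp (-(2 * I) * φ) * √(5 / (16 * π)) * Real.sin θ) *
      (Real.cos θ * thetahat θ φ i + I * (-1 : ℝ) * phihat θ φ i) := by
    simp only [Y2v, Int.reduceEq, Int.reduceNeg, ↓reduceIte, ofReal_neg, ofReal_one]
    ring_nf
  rw [h, sum_norm_sq_mul_thetahat_add_I_mul_phihat, norm_mul, norm_mul,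
    norm_exp_eq_one_of_re_eq_zero (by simp), norm_real, norm_real, Real.norm_eq_abs,
    Real.norm_eq_abs, one_mul, mul_pow, sq_abs, sq_abs, Real.sq_sqrt (by positivity), Real.sin_sq]
  ring

lemma Y2v_eq_zero {p : ℤ} (hp : p < -2 ∨ 2 < p) : Y2v p θ φ = 0 := by
  unfold Y2v
  rw [if_neg (by omega), if_neg (by omega), if_neg (by omega), if_neg (by omega),
    if_neg (by omega)]

end Y2v

theorem vsh_power_distribution_general (θ φ : ℝ) (p : ℤ) :
    (∑ i, ‖Y2v p θ φ i‖ ^ 2)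
      = (1 / 12) * ((((2 + p) * (3 - p) : ℤ) : ℝ) * ‖Y2s (p - 1) θ φ‖ ^ 2
          + (((2 * p ^ 2 : ℤ)) : ℝ) * ‖Y2s p θ φ‖ ^ 2
          + (((2 - p) * (3 + p) : ℤ) : ℝ) * ‖Y2s (p + 1) θ φ‖ ^ 2) := by
  by_cases hp : p < -3 ∨ 3 < p
  · rw [Y2v_eq_zero θ φ (p := p) (by omega), Y2s_eq_zero θ φ (m := p - 1) (by omega),
      Y2s_eq_zero θ φ (m := p) (by omega), Y2s_eq_zero θ φ (m := p + 1) (by omega)]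
    simp
  obtain rfl | rfl | rfl | rfl | rfl | rfl | rfl :
      p = -3 ∨ p = -2 ∨ p = -1 ∨ p = 0 ∨ p = 1 ∨ p = 2 ∨ p = 3 := by omega
  all_goals
    norm_num [Y2s_eq_zero, Y2v_eq_zero, norm_sq_Y2s_zero, norm_sq_Y2s_one, norm_sq_Y2s_neg_one,
      norm_sq_Y2s_two, norm_sq_Y2s_neg_two, sum_norm_sq_Y2v_zero, sum_norm_sq_Y2v_one,
      sum_norm_sq_Y2v_neg_one, sum_norm_sq_Y2v_two, sum_norm_sq_Y2v_neg_two] <;> ring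

/-- the paper's angular-power-distribution formula for K = 2:
‖Y⁽⁺¹⁾₂,ₚ‖² = (1/12)[(2+p)(3−p)|Y₂,ₚ₋₁|² + 2p²|Y₂,ₚ|² + (2−p)(3+p)|Y₂,ₚ₊₁|²]. -/
theorem vsh_power_distribution (θ φ : ℝ) (p : ℤ) (hp : |p| ≤ 2) :
    (∑ i, ‖Y2v p θ φ i‖ ^ 2)
      = (1 / 12) * ((((2 + p) * (3 - p) : ℤ) : ℝ) * ‖Y2s (p - 1) θ φ‖ ^ 2
          + (((2 * p ^ 2 : ℤ)) : ℝ) * ‖Y2s p θ φ‖ ^ 2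
          + (((2 - p) * (3 + p) : ℤ) : ℝ) * ‖Y2s (p + 1) θ φ‖ ^ 2) :=
  vsh_power_distribution_general θ φ p
end
end

section
/- For all real angles θ, φ and every ε ∈ ℂ³ with Σᵢ |εᵢ|² = 1 and ε·k̂(θ,φ) = 0, one has |ε·Y⁽⁺¹⁾₁,₀(θ,φ)| ≤ √(3/(8π)). Moreover, in the power-optimal geometry θ = π/2 with ε = θ̂(π/2,φ), equality holds with ε·Y⁽⁺¹⁾₁,₀ = −√(3/(8π)), and simultaneously ε·Y⁽⁺¹⁾₁,₊₁(π/2,φ) = 0 and ε·Y⁽⁺¹⁾₁,₋₁(π/2,φ) = 0. -/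
noncomputable section

open Real Complex

/-- bound |ε·Y⁽⁺¹⁾₁,₀| ≤ √(3/(8π)) for unit ε ⊥ k̂, with equality in the
power-optimal geometry θ = π/2, ε = θ̂, where also the σ± couplings vanish. -/
theorem pi_transition_optimal_geometry :
    (∀ θ φ : ℝ, ∀ ε : Fin 3 → ℂ, (∑ i, ‖ε i‖ ^ 2) = 1 → dotc ε (khat θ φ) = 0 →
      ‖dotc ε (Y1v 0 θ φ)‖ ≤ Real.sqrt (3 / (8 * Real.pi)))
    ∧ (∀ φ : ℝ,
        dotc (thetahat (Real.pi / 2) φ) (Y1v 0 (Real.pi / 2) φ)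
          = -((Real.sqrt (3 / (8 * Real.pi)) : ℝ) : ℂ)
        ∧ dotc (thetahat (Real.pi / 2) φ) (Y1v 1 (Real.pi / 2) φ) = 0
        ∧ dotc (thetahat (Real.pi / 2) φ) (Y1v (-1) (Real.pi / 2) φ) = 0) := by
  constructor
  · intro θ φ ε hε _
    have h9 : dotc ε (Y1v 0 θ φ)
        = -((Real.sqrt (3 / (8 * Real.pi)) : ℝ) : ℂ) * ((Real.sin θ : ℝ) : ℂ) *
          dotc ε (thetahat θ φ) := by
      simp [Y1v, dotc, thetahat, Fin.sum_univ_three]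
      ring
    have hsq : (0:ℝ) ≤ Real.sqrt (3 / (8 * Real.pi)) := Real.sqrt_nonneg _
    rw [h9]
    have hsin : |Real.sin θ| ≤ 1 := abs_sin_le_one θ
    have ht : ‖dotc ε (thetahat θ φ)‖ ≤ 1 := by
      have expand : dotc ε (thetahat θ φ)
          = ε 0 * ((Real.cos θ * Real.cos φ : ℝ) : ℂ)
            + ε 1 * ((Real.cos θ * Real.sin φ : ℝ) : ℂ)
            + ε 2 * ((-Real.sin θ : ℝ) : ℂ) := by
        simp [dotc, thetahat, Fin.sum_univ_three]
      rw [expand]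
      have h1 : ‖ε 0 * ((Real.cos θ * Real.cos φ : ℝ) : ℂ)
            + ε 1 * ((Real.cos θ * Real.sin φ : ℝ) : ℂ)
            + ε 2 * ((-Real.sin θ : ℝ) : ℂ)‖
          ≤ ‖ε 0 * ((Real.cos θ * Real.cos φ : ℝ) : ℂ)‖
            + ‖ε 1 * ((Real.cos θ * Real.sin φ : ℝ) : ℂ)‖
            + ‖ε 2 * ((-Real.sin θ : ℝ) : ℂ)‖ := norm_add₃_le
      simp only [norm_mul, Complex.norm_real, Real.norm_eq_abs] at h1
      refine le_trans h1 ?_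
      have hεsum : ‖ε 0‖ ^ 2 + ‖ε 1‖ ^ 2 + ‖ε 2‖ ^ 2 = 1 := by
        simpa [Fin.sum_univ_three] using hε
      have htsum : (|Real.cos θ| * |Real.cos φ|) ^ 2 + (|Real.cos θ| * |Real.sin φ|) ^ 2
          + |(-Real.sin θ)| ^ 2 = 1 := by
        simp only [mul_pow, _root_.sq_abs]
        nlinarith [Real.sin_sq_add_cos_sq θ, Real.sin_sq_add_cos_sq φ]
      nlinarith [sq_nonneg (‖ε 0‖ - |Real.cos θ| * |Real.cos φ|),
        sq_nonneg (‖ε 1‖ - |Real.cos θ| * |Real.sin φ|),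
        sq_nonneg (‖ε 2‖ - |(-Real.sin θ)|)]
    calc ‖-((Real.sqrt (3 / (8 * Real.pi)) : ℝ) : ℂ) * ((Real.sin θ : ℝ) : ℂ) *
          dotc ε (thetahat θ φ)‖
        = Real.sqrt (3 / (8 * Real.pi)) * |Real.sin θ| * ‖dotc ε (thetahat θ φ)‖ := by
          rw [norm_mul, norm_mul, norm_neg, Complex.norm_real, Complex.norm_real,
            Real.norm_eq_abs, Real.norm_eq_abs, _root_.abs_of_nonneg hsq]
      _ ≤ Real.sqrt (3 / (8 * Real.pi)) * 1 * 1 := by gcongr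
      _ = Real.sqrt (3 / (8 * Real.pi)) := by ring
  · intro φ
    refine ⟨?_, ?_, ?_⟩
    · simp [Y1v, dotc, thetahat, Fin.sum_univ_three]
    · simp [Y1v, dotc, thetahat, phihat, Fin.sum_univ_three]
    · simp [Y1v, dotc, thetahat, phihat, Fin.sum_univ_three]
end
end

section
/- Consider two coherent plane waves with wave vectors k̂ᵢ = k̂(π/2, φ_{k,i}) in the xy-plane, polarizations εᵢ = φ̂(π/2, φ_{k,i}) (i = 1, 2), and relative phase φ ∈ ℝ. Define the combined dipole coupling C±(φ) = ε₁·Y⁽⁺¹⁾₁,±₁(π/2, φ_{k,1}) + e^{iφ} ε₂·Y⁽⁺¹⁾₁,±₁(π/2, φ_{k,2}). Then C±(φ) = −i √(3/(16π)) e^{±iφ_{k,1}} (1 + e^{i(φ ± (φ_{k,2} − φ_{k,1}))}), and C±(φ) = 0 if and only if φ ≡ π ∓ (φ_{k,2} − φ_{k,1}) (mod 2π). Consequently, when the two k̂ vectors are not collinear (φ_{k,2} − φ_{k,1} ∉ πℤ), the phase suppressing C₊ leaves C₋ nonzero and vice versa. -/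
noncomputable section

open Real Complex

/-- Combined dipole coupling of two coherent in-plane waves with φ̂ polarizations and
relative phase φ, for the σ^s components (s = ±1). -/
def Cpm (φk1 φk2 : ℝ) (s : ℤ) (φ : ℝ) : ℂ :=
  dotc (phihat (Real.pi / 2) φk1) (Y1v s (Real.pi / 2) φk1)
    + Complex.exp (Complex.I * (φ : ℂ)) *
        dotc (phihat (Real.pi / 2) φk2) (Y1v s (Real.pi / 2) φk2)


lemma dot1 (a : ℝ) :
    dotc (phihat (Real.pi / 2) a) (Y1v 1 (Real.pi / 2) a)
      = -Complex.I * ((Real.sqrt (3 / (16 * Real.pi)) : ℝ) : ℂ)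
          * Complex.exp (Complex.I * (a : ℂ)) := by
  have h : ((Real.sin a : ℝ) : ℂ)^2 + ((Real.cos a : ℝ) : ℂ)^2 = 1 := by
    norm_cast; exact Real.sin_sq_add_cos_sq a
  simp only [dotc, Y1v, phihat, thetahat, Fin.sum_univ_three, Int.reduceEq, Int.reduceNeg,
    reduceIte, Matrix.cons_val_zero, Matrix.cons_val_one, Matrix.head_cons, Matrix.cons_val_two,
    Matrix.tail_cons, Real.cos_pi_div_two, Real.sin_pi_div_two, Complex.ofReal_zero,
    Complex.ofReal_one, Complex.ofReal_neg, Complex.ofReal_mul, zero_mul, mul_zero,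
    neg_mul, one_mul, mul_one, neg_neg]
  generalize ((Real.sqrt (3 / (16 * Real.pi)) : ℝ) : ℂ) = d
  linear_combination (-(Complex.I * Complex.exp (Complex.I * a) * d)) * h

lemma dotm1 (a : ℝ) :
    dotc (phihat (Real.pi / 2) a) (Y1v (-1) (Real.pi / 2) a)
      = -Complex.I * ((Real.sqrt (3 / (16 * Real.pi)) : ℝ) : ℂ)
          * Complex.exp (-(Complex.I * (a : ℂ))) := by
  have h : ((Real.sin a : ℝ) : ℂ)^2 + ((Real.cos a : ℝ) : ℂ)^2 = 1 := by
    norm_cast; exact Real.sin_sq_add_cos_sq a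
  simp only [dotc, Y1v, phihat, thetahat, Fin.sum_univ_three, Int.reduceEq, Int.reduceNeg,
    reduceIte, Matrix.cons_val_zero, Matrix.cons_val_one, Matrix.head_cons, Matrix.cons_val_two,
    Matrix.tail_cons, Real.cos_pi_div_two, Real.sin_pi_div_two, Complex.ofReal_zero,
    Complex.ofReal_one, Complex.ofReal_neg, Complex.ofReal_mul, zero_mul, mul_zero,
    neg_mul, one_mul, mul_one, neg_neg]
  generalize ((Real.sqrt (3 / (16 * Real.pi)) : ℝ) : ℂ) = d
  linear_combination (-Complex.I * Complex.exp (-(Complex.I * a)) * d) * h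

lemma exp_I_eq_neg_one_iff (x : ℝ) :
    Complex.exp (Complex.I * (x : ℂ)) = -1 ↔ ∃ n : ℤ, x = Real.pi + 2 * Real.pi * n := by
  constructor
  · intro hx
    have h1 : Complex.exp (Complex.I * (x : ℂ) - (Real.pi : ℂ) * Complex.I) = 1 := by
      rw [Complex.exp_sub, hx, Complex.exp_pi_mul_I]; norm_num
    rw [Complex.exp_eq_one_iff] at h1
    obtain ⟨n, hn⟩ := h1
    refine ⟨n, ?_⟩
    have h2 : Complex.I * ((x : ℂ) - (Real.pi : ℂ) - 2 * (Real.pi : ℂ) * n) = 0 := by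
      linear_combination hn
    rcases mul_eq_zero.mp h2 with h | h
    · exact absurd h Complex.I_ne_zero
    · have h3 : (x : ℂ) = (Real.pi : ℂ) + 2 * (Real.pi : ℂ) * n := by linear_combination h
      exact_mod_cast h3
  · rintro ⟨n, rfl⟩
    push_cast
    rw [show Complex.I * ((Real.pi : ℂ) + 2 * (Real.pi : ℂ) * (n : ℂ))
        = (n : ℂ) * (2 * (Real.pi : ℂ) * Complex.I) + (Real.pi : ℂ) * Complex.I by ring,
      Complex.exp_add, Complex.exp_int_mul_two_pi_mul_I, Complex.exp_pi_mul_I]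
    norm_num

lemma sqrt_ne : ((Real.sqrt (3 / (16 * Real.pi)) : ℝ) : ℂ) ≠ 0 := by
  have : (0:ℝ) < Real.sqrt (3 / (16 * Real.pi)) := Real.sqrt_pos.mpr (by positivity)
  exact_mod_cast this.ne'

lemma Cpm_formula (φk1 φk2 : ℝ) (s : ℤ) (hs : s = 1 ∨ s = -1) (φ : ℝ) :
    Cpm φk1 φk2 s φ
      = -Complex.I * ((Real.sqrt (3 / (16 * Real.pi)) : ℝ) : ℂ)
          * Complex.exp ((s : ℂ) * Complex.I * (φk1 : ℂ))
          * (1 + Complex.exp (Complex.I * ((φ : ℂ) + (s : ℂ) * ((φk2 : ℂ) - (φk1 : ℂ))))) := by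
  rcases hs with rfl | rfl
  · rw [Cpm, dot1, dot1]
    push_cast
    have e1 : Complex.exp ((1:ℂ) * Complex.I * (φk1 : ℂ))
        = Complex.exp (Complex.I * (φk1 : ℂ)) := by congr 1; ring
    have h2 : Complex.exp (Complex.I * ((φ : ℂ) + (1:ℂ) * ((φk2 : ℂ) - (φk1 : ℂ))))
          * Complex.exp (Complex.I * (φk1 : ℂ))
        = Complex.exp (Complex.I * (φ : ℂ)) * Complex.exp (Complex.I * (φk2 : ℂ)) := by
      rw [← Complex.exp_add, ← Complex.exp_add]; congr 1; ring
    rw [e1]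
    linear_combination (Complex.I * ((Real.sqrt (3 / (16 * Real.pi)) : ℝ) : ℂ)) * h2
  · rw [Cpm, dotm1, dotm1]
    push_cast
    have e1 : Complex.exp ((-1:ℂ) * Complex.I * (φk1 : ℂ))
        = Complex.exp (-(Complex.I * (φk1 : ℂ))) := by congr 1; ring
    have h2 : Complex.exp (Complex.I * ((φ : ℂ) + (-1:ℂ) * ((φk2 : ℂ) - (φk1 : ℂ))))
          * Complex.exp (-(Complex.I * (φk1 : ℂ)))
        = Complex.exp (Complex.I * (φ : ℂ)) * Complex.exp (-(Complex.I * (φk2 : ℂ))) := by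
      rw [← Complex.exp_add, ← Complex.exp_add]; congr 1; ring
    rw [e1]
    linear_combination (Complex.I * ((Real.sqrt (3 / (16 * Real.pi)) : ℝ) : ℂ)) * h2

lemma Cpm_zero_iff (φk1 φk2 : ℝ) (s : ℤ) (hs : s = 1 ∨ s = -1) (φ : ℝ) :
    Cpm φk1 φk2 s φ = 0 ↔
      ∃ n : ℤ, φ = Real.pi - (s : ℝ) * (φk2 - φk1) + 2 * Real.pi * (n : ℝ) := by
  rw [Cpm_formula φk1 φk2 s hs φ]
  have hne : -Complex.I * ((Real.sqrt (3 / (16 * Real.pi)) : ℝ) : ℂ)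
      * Complex.exp ((s : ℂ) * Complex.I * (φk1 : ℂ)) ≠ 0 := by
    apply mul_ne_zero (mul_ne_zero (by simpa using Complex.I_ne_zero) sqrt_ne)
    exact Complex.exp_ne_zero _
  rw [mul_eq_zero, or_iff_right hne]
  have harg : Complex.I * ((φ : ℂ) + (s : ℂ) * ((φk2 : ℂ) - (φk1 : ℂ)))
      = Complex.I * (((φ + (s : ℝ) * (φk2 - φk1) : ℝ) : ℂ)) := by push_cast; ring
  constructor
  · intro h
    have hneg : Complex.exp (Complex.I * (((φ + (s : ℝ) * (φk2 - φk1) : ℝ) : ℂ))) = -1 := by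
      rw [← harg]; linear_combination h
    obtain ⟨n, hn⟩ := (exp_I_eq_neg_one_iff _).mp hneg
    exact ⟨n, by linarith⟩
  · rintro ⟨n, hn⟩
    have : φ + (s : ℝ) * (φk2 - φk1) = Real.pi + 2 * Real.pi * n := by linarith
    have hneg := (exp_I_eq_neg_one_iff (φ + (s : ℝ) * (φk2 - φk1))).mpr ⟨n, this⟩
    rw [harg, hneg]; ring

/-- two-wave interference for E1 σ± couplings:
C±(φ) = −i√(3/(16π)) e^{±iφ_{k,1}} (1 + e^{i(φ ± (φ_{k,2} − φ_{k,1}))}),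
C±(φ) = 0 iff φ ≡ π ∓ (φ_{k,2} − φ_{k,1}) (mod 2π), and if the waves are not
collinear the phase suppressing one σ component leaves the other nonzero. -/
theorem two_wave_dipole_interference (φk1 φk2 : ℝ) :
    (∀ s : ℤ, (s = 1 ∨ s = -1) → ∀ φ : ℝ,
        Cpm φk1 φk2 s φ
          = -Complex.I * ((Real.sqrt (3 / (16 * Real.pi)) : ℝ) : ℂ)
              * Complex.exp ((s : ℂ) * Complex.I * (φk1 : ℂ))
              * (1 + Complex.exp (Complex.I * ((φ : ℂ) + (s : ℂ) * ((φk2 : ℂ) - (φk1 : ℂ)))))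
        ∧ (Cpm φk1 φk2 s φ = 0 ↔
            ∃ n : ℤ, φ = Real.pi - (s : ℝ) * (φk2 - φk1) + 2 * Real.pi * (n : ℝ)))
    ∧ ((¬ ∃ n : ℤ, φk2 - φk1 = (n : ℝ) * Real.pi) →
        ∀ φ : ℝ, (Cpm φk1 φk2 1 φ = 0 → Cpm φk1 φk2 (-1) φ ≠ 0)
          ∧ (Cpm φk1 φk2 (-1) φ = 0 → Cpm φk1 φk2 1 φ ≠ 0)) := by
  constructor
  · intro s hs φ
    exact ⟨Cpm_formula φk1 φk2 s hs φ, Cpm_zero_iff φk1 φk2 s hs φ⟩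
  · intro hcol φ
    have key : ¬ (Cpm φk1 φk2 1 φ = 0 ∧ Cpm φk1 φk2 (-1) φ = 0) := by
      rintro ⟨h1, h2⟩
      obtain ⟨n, hn⟩ := (Cpm_zero_iff φk1 φk2 1 (Or.inl rfl) φ).mp h1
      obtain ⟨m, hm⟩ := (Cpm_zero_iff φk1 φk2 (-1) (Or.inr rfl) φ).mp h2
      push_cast at hn hm
      exact hcol ⟨n - m, by push_cast; linarith⟩
    exact ⟨fun h1 h2 => key ⟨h1, h2⟩, fun h2 h1 => key ⟨h1, h2⟩⟩
end
end

section
/- Consider two coherent plane waves with wave vectors k̂ᵢ = k̂(π/2, φ_{k,i}) in the xy-plane, polarizations εᵢ = φ̂(π/2, φ_{k,i}) (i = 1, 2), and relative phase φ ∈ ℝ. Define the combined quadrupole coupling Q±(φ) = ε₁·Y⁽⁺¹⁾₂,±₂(π/2, φ_{k,1}) + e^{iφ} ε₂·Y⁽⁺¹⁾₂,±₂(π/2, φ_{k,2}). Then Q±(φ) = ±i √(5/(16π)) e^{±2iφ_{k,1}} (1 + e^{i(φ ± 2(φ_{k,2} − φ_{k,1}))}), and Q±(φ) = 0 if and only if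 φ ≡ π ∓ 2(φ_{k,2} − φ_{k,1}) (mod 2π). In particular, for two linearly polarized waves crossing at angle φ_{k,2} − φ_{k,1} = π/4, choosing the relative phase to suppress one |Δm| = 2 component leaves the other with maximal modulus. -/
noncomputable section

open Real Complex

/-- Combined quadrupole coupling of two coherent in-plane waves with φ̂ polarizations and
relative phase φ, for the Δm = ±2 components (s = ±1 labels the sign, component 2s). -/
def Qpm (φk1 φk2 : ℝ) (s : ℤ) (φ : ℝ) : ℂ :=
  dotc (phihat (Real.pi / 2) φk1) (Y2v (2 * s) (Real.pi / 2) φk1)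
    + Complex.exp (Complex.I * (φ : ℂ)) *
        dotc (phihat (Real.pi / 2) φk2) (Y2v (2 * s) (Real.pi / 2) φk2)

lemma dot_pos (φk : ℝ) :
    dotc (phihat (Real.pi/2) φk) (Y2v 2 (Real.pi/2) φk)
      = Complex.I * ((Real.sqrt (5/(16*Real.pi)) : ℝ) : ℂ) * Complex.exp (2*Complex.I*(φk:ℂ)) := by
  have h : Complex.sin (φk:ℂ) ^ 2 + Complex.cos (φk:ℂ) ^ 2 = 1 := Complex.sin_sq_add_cos_sq _
  simp only [dotc, Y2v, phihat, thetahat, Fin.sum_univ_three, Matrix.cons_val_zero,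
    Matrix.cons_val_one, Matrix.head_cons, Matrix.cons_val_two, Matrix.tail_cons,
    Real.cos_pi_div_two, Real.sin_pi_div_two, reduceIte]
  push_cast
  linear_combination (Complex.I * ((Real.sqrt (5/(16*Real.pi)) : ℝ) : ℂ)
    * Complex.exp (2*Complex.I*(φk:ℂ))) * h
lemma dot_neg (φk : ℝ) :
    dotc (phihat (Real.pi/2) φk) (Y2v (-2) (Real.pi/2) φk)
      = -Complex.I * ((Real.sqrt (5/(16*Real.pi)) : ℝ) : ℂ)
        * Complex.exp (-(2*Complex.I)*(φk:ℂ)) := by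
  have h : Complex.sin (φk:ℂ) ^ 2 + Complex.cos (φk:ℂ) ^ 2 = 1 := Complex.sin_sq_add_cos_sq _
  simp only [dotc, Y2v, phihat, thetahat, Fin.sum_univ_three, Matrix.cons_val_zero,
    Matrix.cons_val_one, Matrix.head_cons, Matrix.cons_val_two, Matrix.tail_cons,
    Real.cos_pi_div_two, Real.sin_pi_div_two, reduceIte]
  push_cast
  linear_combination (-Complex.I * ((Real.sqrt (5/(16*Real.pi)) : ℝ) : ℂ)
    * Complex.exp (-(2*Complex.I)*(φk:ℂ))) * h

lemma one_add_exp_eq_zero_iff (x : ℝ) :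
    1 + Complex.exp (Complex.I * (x:ℝ)) = 0 ↔ ∃ n : ℤ, x = Real.pi + 2*Real.pi*(n:ℝ) := by
  constructor
  · intro h
    have hx : Complex.exp (Complex.I * (x:ℝ)) = -1 := by linear_combination h
    have h1 : Complex.exp (Complex.I * (x:ℝ) + Real.pi * Complex.I) = 1 := by
      rw [Complex.exp_add, Complex.exp_pi_mul_I, hx]; ring
    rw [Complex.exp_eq_one_iff] at h1
    obtain ⟨n, hn⟩ := h1
    refine ⟨n - 1, ?_⟩
    have him := congrArg Complex.im hn
    simp [Complex.add_im, Complex.mul_im] at him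
    push_cast at him ⊢
    linarith
  · rintro ⟨n, rfl⟩
    have harg : Complex.I * ((Real.pi + 2*Real.pi*(n:ℝ) : ℝ) : ℂ)
        = Real.pi*Complex.I + (n:ℂ)*(2*Real.pi*Complex.I) := by push_cast; ring
    rw [harg, Complex.exp_add, Complex.exp_pi_mul_I, Complex.exp_int_mul_two_pi_mul_I]
    ring
lemma Qpm_pos (φk1 φk2 φ : ℝ) :
    Qpm φk1 φk2 1 φ
      = Complex.I * ((Real.sqrt (5/(16*Real.pi)) : ℝ) : ℂ)
          * Complex.exp (2*Complex.I*(φk1:ℂ))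
          * (1 + Complex.exp (Complex.I * ((φ:ℂ) + 2*((φk2:ℂ) - (φk1:ℂ))))) := by
  have key : Complex.exp (2*Complex.I*(φk1:ℂ))
        * Complex.exp (Complex.I * ((φ:ℂ) + 2*((φk2:ℂ) - (φk1:ℂ))))
      = Complex.exp (Complex.I*(φ:ℂ)) * Complex.exp (2*Complex.I*(φk2:ℂ)) := by
    rw [← Complex.exp_add, ← Complex.exp_add]; congr 1; ring
  rw [Qpm, show (2*(1:ℤ)) = 2 by norm_num, dot_pos φk1, dot_pos φk2]
  linear_combination (-Complex.I * ((Real.sqrt (5/(16*Real.pi)) : ℝ) : ℂ)) * key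

lemma Qpm_neg (φk1 φk2 φ : ℝ) :
    Qpm φk1 φk2 (-1) φ
      = -Complex.I * ((Real.sqrt (5/(16*Real.pi)) : ℝ) : ℂ)
          * Complex.exp (-(2*Complex.I)*(φk1:ℂ))
          * (1 + Complex.exp (Complex.I * ((φ:ℂ) - 2*((φk2:ℂ) - (φk1:ℂ))))) := by
  have key : Complex.exp (-(2*Complex.I)*(φk1:ℂ))
        * Complex.exp (Complex.I * ((φ:ℂ) - 2*((φk2:ℂ) - (φk1:ℂ))))
      = Complex.exp (Complex.I*(φ:ℂ)) * Complex.exp (-(2*Complex.I)*(φk2:ℂ)) := by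
    rw [← Complex.exp_add, ← Complex.exp_add]; congr 1; ring
  rw [Qpm, show (2*(-1:ℤ)) = -2 by norm_num, dot_neg φk1, dot_neg φk2]
  linear_combination (Complex.I * ((Real.sqrt (5/(16*Real.pi)) : ℝ) : ℂ)) * key
lemma expE_norm (a : ℝ) : ‖Complex.exp (-(2*Complex.I)*(a:ℂ))‖ = 1 := by
  rw [show -(2*Complex.I)*(a:ℂ) = ((-(2*a):ℝ):ℂ)*Complex.I by push_cast; ring]
  exact Complex.norm_exp_ofReal_mul_I _

lemma expE_norm' (a : ℝ) : ‖Complex.exp (2*Complex.I*(a:ℂ))‖ = 1 := by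
  rw [show 2*Complex.I*(a:ℂ) = (((2*a):ℝ):ℂ)*Complex.I by push_cast; ring]
  exact Complex.norm_exp_ofReal_mul_I _

lemma hc0 : ((Real.sqrt (5/(16*Real.pi)) : ℝ) : ℂ) ≠ 0 :=
  Complex.ofReal_ne_zero.mpr (ne_of_gt (Real.sqrt_pos.mpr (by positivity)))

/-- two-wave interference for E2 Δm = ±2 couplings:
Q±(φ) = ±i√(5/(16π)) e^{±2iφ_{k,1}} (1 + e^{i(φ ± 2(φ_{k,2} − φ_{k,1}))}),
Q±(φ) = 0 iff φ ≡ π ∓ 2(φ_{k,2} − φ_{k,1}) (mod 2π).  In particular for waves crossing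
at φ_{k,2} − φ_{k,1} = π/4, suppressing one |Δm| = 2 component leaves the other with
maximal modulus 2√(5/(16π)). -/
theorem two_wave_quadrupole_interference (φk1 φk2 : ℝ) :
    (∀ s : ℤ, (s = 1 ∨ s = -1) → ∀ φ : ℝ,
        Qpm φk1 φk2 s φ
          = (s : ℂ) * Complex.I * ((Real.sqrt (5 / (16 * Real.pi)) : ℝ) : ℂ)
              * Complex.exp (2 * (s : ℂ) * Complex.I * (φk1 : ℂ))
              * (1 + Complex.exp (Complex.I *
                  ((φ : ℂ) + 2 * (s : ℂ) * ((φk2 : ℂ) - (φk1 : ℂ)))))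
        ∧ (Qpm φk1 φk2 s φ = 0 ↔
            ∃ n : ℤ, φ = Real.pi - (s : ℝ) * (2 * (φk2 - φk1)) + 2 * Real.pi * (n : ℝ)))
    ∧ (φk2 - φk1 = Real.pi / 4 →
        ∀ φ : ℝ,
          (Qpm φk1 φk2 1 φ = 0 →
            ‖Qpm φk1 φk2 (-1) φ‖ = 2 * Real.sqrt (5 / (16 * Real.pi)))
          ∧ (Qpm φk1 φk2 (-1) φ = 0 →
            ‖Qpm φk1 φk2 1 φ‖ = 2 * Real.sqrt (5 / (16 * Real.pi)))) := by
  constructor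
  · intro s hs φ
    rcases hs with rfl | rfl
    · refine ⟨?_, ?_⟩
      · rw [Qpm_pos]
        push_cast
        ring_nf
      · rw [Qpm_pos,
          show Complex.I * ((φ:ℂ) + 2*((φk2:ℂ) - (φk1:ℂ)))
              = Complex.I * ((φ + 2*(φk2-φk1) : ℝ) : ℂ) by push_cast; ring]
        constructor
        · intro h0
          have h := (mul_eq_zero.mp h0).resolve_left
            (mul_ne_zero (mul_ne_zero Complex.I_ne_zero hc0) (Complex.exp_ne_zero _))
          obtain ⟨n, hn⟩ := (one_add_exp_eq_zero_iff _).mp h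
          exact ⟨n, by push_cast; linarith⟩
        · rintro ⟨n, hn⟩
          apply mul_eq_zero_of_right
          rw [one_add_exp_eq_zero_iff]
          exact ⟨n, by push_cast at hn ⊢; linarith⟩
    · refine ⟨?_, ?_⟩
      · rw [Qpm_neg]
        push_cast
        ring_nf
      · rw [Qpm_neg,
          show Complex.I * ((φ:ℂ) - 2*((φk2:ℂ) - (φk1:ℂ)))
              = Complex.I * ((φ - 2*(φk2-φk1) : ℝ) : ℂ) by push_cast; ring]
        constructor
        · intro h0
          have h := (mul_eq_zero.mp h0).resolve_left
            (mul_ne_zero (mul_ne_zero (neg_ne_zero.mpr Complex.I_ne_zero) hc0)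
              (Complex.exp_ne_zero _))
          obtain ⟨n, hn⟩ := (one_add_exp_eq_zero_iff _).mp h
          exact ⟨n, by push_cast; linarith⟩
        · rintro ⟨n, hn⟩
          apply mul_eq_zero_of_right
          rw [one_add_exp_eq_zero_iff]
          exact ⟨n, by push_cast at hn ⊢; linarith⟩
  · intro hΔ φ
    have hΔ4 : (φk2:ℂ) - (φk1:ℂ) = (Real.pi:ℂ)/4 := by
      have h := congrArg (fun r : ℝ => (r:ℂ)) hΔ
      push_cast at h
      linear_combination h
    constructor
    · intro h0
      rw [Qpm_pos] at h0
      have hX : Complex.exp (Complex.I * ((φ:ℂ) + 2*((φk2:ℂ) - (φk1:ℂ)))) = -1 := by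
        have h := (mul_eq_zero.mp h0).resolve_left
          (mul_ne_zero (mul_ne_zero Complex.I_ne_zero hc0) (Complex.exp_ne_zero _))
        linear_combination h
      have e1 : Complex.exp (Complex.I*((φ:ℂ) - 2*((φk2:ℂ)-(φk1:ℂ)))) = 1 := by
        rw [show Complex.I*((φ:ℂ) - 2*((φk2:ℂ)-(φk1:ℂ)))
            = Complex.I*((φ:ℂ) + 2*((φk2:ℂ)-(φk1:ℂ))) + -(Real.pi*Complex.I) by
          rw [hΔ4]; ring]
        rw [Complex.exp_add, hX, Complex.exp_neg, Complex.exp_pi_mul_I]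
        norm_num
      rw [Qpm_neg, e1, show (1:ℂ)+1 = 2 by norm_num,
        norm_mul, norm_mul, norm_mul, norm_neg, Complex.norm_I, expE_norm,
        Complex.norm_real, Real.norm_eq_abs, _root_.abs_of_nonneg (Real.sqrt_nonneg _),
        show ‖(2:ℂ)‖ = 2 by norm_num]
      ring
    · intro h0
      rw [Qpm_neg] at h0
      have hX : Complex.exp (Complex.I * ((φ:ℂ) - 2*((φk2:ℂ) - (φk1:ℂ)))) = -1 := by
        have h := (mul_eq_zero.mp h0).resolve_left
          (mul_ne_zero (mul_ne_zero (neg_ne_zero.mpr Complex.I_ne_zero) hc0)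
            (Complex.exp_ne_zero _))
        linear_combination h
      have e1 : Complex.exp (Complex.I*((φ:ℂ) + 2*((φk2:ℂ)-(φk1:ℂ)))) = 1 := by
        rw [show Complex.I*((φ:ℂ) + 2*((φk2:ℂ)-(φk1:ℂ)))
            = Complex.I*((φ:ℂ) - 2*((φk2:ℂ)-(φk1:ℂ))) + Real.pi*Complex.I by
          rw [hΔ4]; ring]
        rw [Complex.exp_add, hX, Complex.exp_pi_mul_I]
        norm_num
      rw [Qpm_pos, e1, show (1:ℂ)+1 = 2 by norm_num,
        norm_mul, norm_mul, norm_mul, Complex.norm_I, expE_norm',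
        Complex.norm_real, Real.norm_eq_abs, _root_.abs_of_nonneg (Real.sqrt_nonneg _),
        show ‖(2:ℂ)‖ = 2 by norm_num]
      ring
end
end
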